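/- arXiv:1909.02435 — 2 statements merged into one kernel-verified Lean document; each statement's English description precedes it below -/
import Mathlib

section
/- For n ≥ 3, the Green operator is covariant under the inversion γ_i(x) = x/|x|²: G(γ_p* f) = γ_r*(G f) for all f ∈ L^p(ℝⁿ, dx), with p = 2n/(n+2) and r = 2n/(n−2). -/
open MeasureTheory Filter Topology
open scoped ENNReal

noncomputable section

/-- The Green operator on `ℝⁿ`, `G(f)(x) = c_n ∫ |x−y|^{2−n} f(y) dy`, with
`c_n = [(n−2)|S^{n−1}|]⁻¹`. -/
def greenOp (n : ℕ) (f : EuclideanSpace ℝ (Fin n) → ℝ)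
    (x : EuclideanSpace ℝ (Fin n)) : ℝ :=
  (((n : ℝ) - 2) *
      (μH[(n : ℝ) - 1] (Metric.sphere (0 : EuclideanSpace ℝ (Fin n)) 1)).toReal)⁻¹ *
    ∫ y, ‖x - y‖ ^ ((2 : ℝ) - n) * f y

/-- The action `γ*_q` for the inversion `γ_i(x) = x/|x|²` (which is its own inverse):
`γ*_q(f)(y) = |J_{γ_i}(y)|^{1/q} f(γ_i y) = |y|^{-2n/q} f(y/|y|²)`. -/
def invStar {n : ℕ} (q : ℝ) (f : EuclideanSpace ℝ (Fin n) → ℝ)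
    (y : EuclideanSpace ℝ (Fin n)) : ℝ :=
  ‖y‖ ^ (-(2 * (n : ℝ)) / q) * f ((‖y‖ ^ 2)⁻¹ • y)

/-! The inversion `γ x = x / ‖x‖²` has Jacobian determinant of absolute value `‖x‖ ^ (-2n)` and
satisfies `‖γ x - γ y‖ = ‖x - y‖ / (‖x‖ ‖y‖)`. Substituting `y = γ z` in `G f (γ x)` thus turns the
kernel `‖γ x - y‖ ^ (2 - n)` into `(‖x‖ ‖z‖) ^ (n - 2) ‖x - z‖ ^ (2 - n)` and `dy` into
`‖z‖ ^ (-2n) dz`, so that `‖x‖ ^ (2 - n) G f (γ x) = G (‖·‖ ^ (-n - 2) f ∘ γ) x`; since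
`2n / p = n + 2` and `2n / r = n - 2`, this is the claimed covariance. -/

open EuclideanGeometry Module

section Inversion

variable {E : Type*} [NormedAddCommGroup E] [InnerProductSpace ℝ E]

theorem inversion_zero_one_apply (x : E) : inversion (0 : E) 1 x = (‖x‖ ^ 2)⁻¹ • x := by
  simp [inversion, dist_eq_norm, one_div]

theorem rpow_norm_inversion_sub_inversion (s : ℝ) {x y : E} (hx : x ≠ 0) (hy : y ≠ 0) :
    ‖inversion (0 : E) 1 x - inversion 0 1 y‖ ^ s = (‖x‖ * ‖y‖) ^ (-s) * ‖x - y‖ ^ s := by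
  have hdist := dist_inversion_inversion hx hy 1
  simp only [dist_eq_norm, sub_zero, one_pow, one_div] at hdist
  rw [hdist, Real.mul_rpow (by positivity) (norm_nonneg _), Real.inv_rpow (by positivity),
    Real.rpow_neg (by positivity)]

variable [FiniteDimensional ℝ E]

theorem abs_det_fderiv_inversion {c x : E} (R : ℝ) (hx : x ≠ c) :
    |(fderiv ℝ (inversion c R) x).det| = (R / dist x c) ^ (2 * finrank ℝ E) := by
  set L : E →L[ℝ] E := (ℝ ∙ (x - c))ᗮ.reflection
  have hL : |LinearMap.det (L : E →ₗ[ℝ] E)| = 1 := by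
    rw [show (L : E →ₗ[ℝ] E) = (ℝ ∙ (x - c))ᗮ.reflection.toLinearMap from rfl,
      Submodule.det_reflection, abs_pow, abs_neg, abs_one, one_pow]
  rw [(hasFDerivAt_inversion hx).fderiv, ContinuousLinearMap.det,
    ContinuousLinearMap.toLinearMap_smul, LinearMap.det_smul, abs_mul, hL, mul_one,
    abs_of_nonneg (by positivity), pow_mul]

variable [MeasurableSpace E] [BorelSpace E] [Nontrivial E] (μ : Measure E) [μ.IsAddHaarMeasure]
  {F : Type*} [NormedAddCommGroup F] [NormedSpace ℝ F]

theorem integral_comp_inversion (c : E) {R : ℝ} (hR : R ≠ 0) (g : E → F) :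
    ∫ x, g x ∂μ = ∫ x, (R / dist x c) ^ (2 * finrank ℝ E) • g (inversion c R x) ∂μ := by
  set s : Set E := {c}ᶜ
  have hμs : μ.restrict s = μ := Measure.restrict_eq_self_of_ae_mem (μ.ae_ne c)
  have himage : inversion c R '' s = s := by
    ext x
    simp [s, (inversion_involutive c hR).image_eq_preimage_symm, inversion_eq_center hR]
  have hderiv : ∀ x ∈ s, HasFDerivWithinAt (inversion c R) (fderiv ℝ (inversion c R) x) s x :=
    fun x hx => (hasFDerivAt_inversion hx).differentiableAt.hasFDerivAt.hasFDerivWithinAt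
  calc ∫ x, g x ∂μ = ∫ x in inversion c R '' s, g x ∂μ := by rw [himage, hμs]
    _ = ∫ x in s, |(fderiv ℝ (inversion c R) x).det| • g (inversion c R x) ∂μ :=
      integral_image_eq_integral_abs_det_fderiv_smul μ (measurableSet_singleton c).compl hderiv
        (inversion_injective c hR).injOn g
    _ = ∫ x in s, (R / dist x c) ^ (2 * finrank ℝ E) • g (inversion c R x) ∂μ :=
      setIntegral_congr_fun (measurableSet_singleton c).compl
        fun x hx => by rw [abs_det_fderiv_inversion R hx]
    _ = ∫ x, (R / dist x c) ^ (2 * finrank ℝ E) • g (inversion c R x) ∂μ := by rw [hμs]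

theorem rpow_norm_mul_integral_rpow_norm_inversion_sub (s : ℝ) (f : E → F) {x : E} (hx : x ≠ 0) :
    ‖x‖ ^ s • ∫ y, ‖inversion 0 1 x - y‖ ^ s • f y ∂μ =
      ∫ y, ‖x - y‖ ^ s • (‖y‖ ^ (-(2 * finrank ℝ E : ℝ) - s) • f (inversion 0 1 y)) ∂μ := by
  rw [integral_comp_inversion μ 0 one_ne_zero, ← integral_smul]
  refine integral_congr_ae ((μ.ae_ne 0).mono fun y hy => ?_)
  have hy' : 0 < ‖y‖ := norm_pos_iff.mpr hy
  have hx' : 0 < ‖x‖ := norm_pos_iff.mpr hx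
  have hjac : (1 / dist y 0) ^ (2 * finrank ℝ E) = ‖y‖ ^ (-(2 * finrank ℝ E : ℝ)) := by
    rw [dist_zero_right, one_div, inv_pow, Real.rpow_neg hy'.le, ← Real.rpow_natCast]
    push_cast
    rfl
  simp only [rpow_norm_inversion_sub_inversion s hx hy, hjac, smul_smul]
  congr 1
  rw [Real.mul_rpow hx'.le hy'.le, Real.rpow_sub hy', Real.rpow_neg hx'.le s,
    Real.rpow_neg hy'.le s]
  field_simp

end Inversion

theorem green_covariance_inversion_general {n : ℕ} (hn : 3 ≤ n)
    (f : EuclideanSpace ℝ (Fin n) → ℝ) :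
    ∀ᵐ x : EuclideanSpace ℝ (Fin n),
      greenOp n (invStar (2 * n / (n + 2) : ℝ) f) x =
        invStar (2 * n / (n - 2) : ℝ) (greenOp n f) x := by
  have hn' : (3 : ℝ) ≤ n := by exact_mod_cast hn
  have hp : -(2 * (n : ℝ)) / (2 * n / (n + 2)) = -(2 * n) - (2 - n) := by
    field_simp
    ring
  have hr : -(2 * (n : ℝ)) / (2 * n / (n - 2)) = 2 - n := by
    have : (n : ℝ) - 2 ≠ 0 := by linarith
    field_simp
    ring
  have : NeZero n := ⟨by omega⟩
  filter_upwards [volume.ae_ne 0] with x hx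
  have hkernel := rpow_norm_mul_integral_rpow_norm_inversion_sub volume (2 - n) f hx
  simp only [finrank_euclideanSpace_fin, smul_eq_mul, inversion_zero_one_apply] at hkernel
  simp only [greenOp, invStar, hp, hr]
  rw [mul_left_comm, hkernel]

/-- for `n ≥ 3` the Green operator is covariant under the inversion
`γ_i(x) = x/|x|²`: `G(γ_p* f) = γ_r*(G f)` for all `f ∈ L^p(ℝⁿ,dx)`, with
`p = 2n/(n+2)` and `r = 2n/(n−2)`. -/
theorem green_covariance_inversion {n : ℕ} (hn : 3 ≤ n)
    (f : EuclideanSpace ℝ (Fin n) → ℝ)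
    (hf : MemLp f (ENNReal.ofReal (2 * n / (n + 2) : ℝ)) volume) :
    ∀ᵐ x : EuclideanSpace ℝ (Fin n),
      greenOp n (invStar (2 * n / (n + 2) : ℝ) f) x =
        invStar (2 * n / (n - 2) : ℝ) (greenOp n f) x :=
  green_covariance_inversion_general hn f

end
end

section
/- Let c_n be the first positive critical point of the solution z of the Bessel-type ODE z'' + ((n−1)/t)z' + (1 − (n−1)/t²)z = 0 with z(0) = 0, z'(0) = 1 (so c_n² = μ₁(𝔹ⁿ), the first nonzero Neumann eigenvalue of the unit ball). Then c_n² ≥ n − 1. -/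
noncomputable section

/-- let `c` be the first positive critical point of the solution `z` of
the Bessel-type ODE `z'' + ((n−1)/t)z' + (1 − (n−1)/t²)z = 0` with `z(0) = 0`,
`z'(0) = 1` (so that `c² = μ₁(𝔹ⁿ)`, the first nonzero Neumann eigenvalue of the unit
ball). Then `c² ≥ n − 1`. -/
theorem bessel_first_critical_point_sq_ge (n : ℕ) (hn : 1 ≤ n)
    (z : ℝ → ℝ) (hz : ContDiff ℝ 2 z)
    (hode : ∀ t : ℝ, 0 < t →
      deriv (deriv z) t + ((n : ℝ) - 1) / t * deriv z t +
        (1 - ((n : ℝ) - 1) / t ^ 2) * z t = 0)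
    (hz0 : z 0 = 0) (hz0' : deriv z 0 = 1)
    (c : ℝ) (hc : 0 < c) (hcrit : deriv z c = 0)
    (hfirst : ∀ t : ℝ, 0 < t → t < c → deriv z t ≠ 0) :
    (n : ℝ) - 1 ≤ c ^ 2 := by
  have hz2 : ContDiff ℝ (1 + 1 : ℕ) z := by exact_mod_cast hz
  have hzd1 : ContDiff ℝ 1 (deriv z) := (contDiff_succ_iff_deriv.mp (by exact_mod_cast hz : ContDiff ℝ ((1:ℕ∞) + 1) z)).2.2
  have hcont : Continuous (deriv z) := hzd1.continuous
  -- deriv z > 0 on (0, c)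
  have hpos : ∀ t : ℝ, 0 < t → t < c → 0 < deriv z t := by
    intro t ht htc
    by_contra h
    push_neg at h
    have hne := hfirst t ht htc
    have hlt : deriv z t < 0 := lt_of_le_of_ne h hne
    obtain ⟨s, hs, hs0⟩ := intermediate_value_Ioo' (le_of_lt ht)
      (hcont.continuousOn (s := Set.Icc 0 t))
      (show (0:ℝ) ∈ Set.Ioo (deriv z t) (deriv z 0) by
        rw [hz0']; exact ⟨hlt, one_pos⟩)
    exact hfirst s hs.1 (hs.2.trans htc) hs0
  -- z(c) > 0
  have hzc : 0 < z c := by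
    have hmono : StrictMonoOn z (Set.Icc 0 c) := by
      apply strictMonoOn_of_deriv_pos (convex_Icc 0 c) hz.continuous.continuousOn
      intro t ht
      rw [interior_Icc] at ht
      exact hpos t ht.1 ht.2
    have := hmono (Set.left_mem_Icc.2 hc.le) (Set.right_mem_Icc.2 hc.le) hc
    rwa [hz0] at this
  -- z''(c) ≤ 0
  have hd2 : HasDerivAt (deriv z) (deriv (deriv z) c) c :=
    ((hzd1.differentiable one_ne_zero) c).hasDerivAt
  have hsecond : deriv (deriv z) c ≤ 0 := by
    have hslope : Filter.Tendsto (slope (deriv z) c) (nhdsWithin c (Set.Iio c))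
        (nhds (deriv (deriv z) c)) :=
      ((hasDerivAt_iff_tendsto_slope.mp hd2).mono_left
        (nhdsWithin_mono c (fun x hx => ne_of_lt hx)))
    refine le_of_tendsto hslope ?_
    filter_upwards [Ioo_mem_nhdsLT_of_mem (show c ∈ Set.Ioc 0 c from ⟨hc, le_rfl⟩)]
      with t ht
    have hzt := hpos t ht.1 ht.2
    rw [slope_def_field]
    have : deriv z t - deriv z c > 0 := by rw [hcrit]; linarith
    have htc : t - c < 0 := sub_neg.mpr ht.2
    exact le_of_lt (div_neg_of_pos_of_neg this htc)
  -- conclude from the ODE at c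
  have hode' := hode c hc
  rw [hcrit] at hode'
  have hkey : 0 ≤ 1 - ((n : ℝ) - 1) / c ^ 2 := by
    nlinarith [hode', hsecond, hzc]
  have hc2 : (0:ℝ) < c ^ 2 := pow_pos hc 2
  have := (div_le_one hc2).mp (by linarith)
  linarith

end
end
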